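/- arXiv:2502.10947 — 6 statements merged into one kernel-verified Lean document; each statement's English description precedes it below -/
import Mathlib

section
/- There exist transcripts with nonpositive external regret with respect to the negative pinball loss but zero coverage: for any even T ≥ 2, define for odd t: τ̂_t = 2/5 and τ_t = 1/2, and for even t: τ̂_t = 9/10 and τ_t = 1. Then (i) for every fixed c ∈ [0,1], Σ_{t=1}^T p_{1/2}(τ̂_t, τ_t) ≤ Σ_{t=1}^T p_{1/2}(c, τ_t); and (ii) the coverage satisfies Cov = (1/T)·#{t : τ̂_t ≥ τ_t} = 0. -/
/-- The pinball loss at level `q`: `p_q(a, τ) = q(τ - a)` if `τ ≥ a`,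
and `(q - 1)(τ - a)` if `τ < a`. -/
noncomputable def pinball (q a τ : ℝ) : ℝ :=
  if a ≤ τ then q * (τ - a) else (q - 1) * (τ - a)

lemma sum_Icc_pair (f : ℕ → ℝ) (m : ℕ) :
    ∑ t ∈ Finset.Icc 1 (2*m), f t = ∑ i ∈ Finset.range m, (f (2*i+1) + f (2*i+2)) := by
  induction m with
  | zero => simp
  | succ n ih =>
      have h1 : 2*(n+1) = (2*n+1) + 1 := by ring
      rw [h1, Finset.sum_Icc_succ_top (by omega), Finset.sum_Icc_succ_top (by omega), ih,
        Finset.sum_range_succ]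
      have : 2*n+1+1 = 2*n+2 := by omega
      rw [this]; ring

theorem stmt3 (T : ℕ) (hT : 2 ≤ T) (hTeven : Even T)
    (τhat τ : ℕ → ℝ)
    (hτhat : ∀ t, τhat t = if Odd t then 2/5 else 9/10)
    (hτ : ∀ t, τ t = if Odd t then 1/2 else 1) :
    (∀ c ∈ Set.Icc (0:ℝ) 1,
      ∑ t ∈ Finset.Icc 1 T, pinball (1/2) (τhat t) (τ t) ≤
        ∑ t ∈ Finset.Icc 1 T, pinball (1/2) c (τ t)) ∧
    (((Finset.Icc 1 T).filter (fun t => τ t ≤ τhat t)).card : ℝ) / T = 0 := by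
  obtain ⟨m, hm⟩ := hTeven
  have hTm : T = 2 * m := by omega
  subst hTm
  constructor
  · intro c hc
    obtain ⟨hc0, hc1⟩ := hc
    have hodd : ∀ i : ℕ, Odd (2*i+1) := fun i => ⟨i, by ring⟩
    have heven : ∀ i : ℕ, ¬ Odd (2*i+2) := by
      intro i h; exact (Nat.not_odd_iff_even.mpr ⟨i+1, by ring⟩) h
    rw [sum_Icc_pair, sum_Icc_pair]
    apply Finset.sum_le_sum
    intro i _
    rw [hτ, hτ, hτhat, hτhat, if_pos (hodd i), if_pos (hodd i),
      if_neg (heven i), if_neg (heven i)]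
    unfold pinball
    rw [if_pos (by norm_num), if_pos (by norm_num)]
    rcases le_or_gt c (1/2) with h | h
    · rw [if_pos h, if_pos (by linarith)]; linarith
    · rw [if_neg (by linarith), if_pos hc1]; linarith
  · have : ((Finset.Icc 1 (2*m)).filter (fun t => τ t ≤ τhat t)) = ∅ := by
      apply Finset.filter_false_of_mem
      intro t _
      rw [hτ, hτhat]
      rcases Nat.even_or_odd t with h | h
      · rw [if_neg (Nat.not_odd_iff_even.mpr h), if_neg (Nat.not_odd_iff_even.mpr h)]
        norm_num
      · rw [if_pos h, if_pos h]; norm_num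
    rw [this]
    simp
end

section
/- Let q ∈ (0,1), T ≥ 1, k ≥ 1. Let g_1,…,g_T ∈ [0,1]^k be group-membership vectors, τ_1,…,τ_T ∈ [0,1] realized thresholds, and θ_1,…,θ_{T+1} ∈ ℝ^k parameter vectors, with predictions τ̂_t = ⟨θ_t, g_t⟩. For each t define the surrogate gradient v_t ∈ ℝ^k by v_t = −q·g_t if τ_t > τ̂_t and v_t = (1−q)·g_t if τ_t ≤ τ̂_t. Let R : ℝ^k → ℝ be differentiable and suppose θ_{T+1} is a global minimizer over ℝ^k of θ ↦ Σ_{t=1}^T ⟨θ, v_t⟩ + R(θ) (the follow-the-regularized-leader iterate). Then for every coordinate i ∈ {1,…,k} with T_i = Σ_{t=1}^T g_{t,i} > 0, the group conditional coverage satisfies |(1/T_i)·Σ_{t=1}^T g_{t,i}·1[τ̂_t ≥ τ_t] − q| ≤ ‖∇R(θ_{T+1})‖_∞ / T_i, where ‖·‖_∞ denotes the maximum absolute value of a coordinate. -/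
theorem stmt9 (q : ℝ) (hq0 : 0 < q) (hq1 : q < 1) (T k : ℕ) (hT : 1 ≤ T) (hk : 1 ≤ k)
    (g : Fin T → Fin k → ℝ) (hg : ∀ t i, g t i ∈ Set.Icc (0:ℝ) 1)
    (τ : Fin T → ℝ) (hτ : ∀ t, τ t ∈ Set.Icc (0:ℝ) 1)
    (θ : Fin (T + 1) → Fin k → ℝ)
    -- predictions τ̂_t = ⟨θ_t, g_t⟩
    (τhat : Fin T → ℝ) (hτhat : ∀ t, τhat t = ∑ i, θ t.castSucc i * g t i)
    -- surrogate gradients v_t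
    (v : Fin T → Fin k → ℝ)
    (hv : ∀ t, v t = if τhat t < τ t then (fun i => -q * g t i) else (fun i => (1 - q) * g t i))
    -- the regularizer is differentiable
    (R : (Fin k → ℝ) → ℝ) (hR : Differentiable ℝ R)
    -- θ_{T+1} is a global minimizer of θ ↦ Σ_t ⟨θ, v_t⟩ + R(θ)
    (hmin : ∀ θ' : Fin k → ℝ,
      (∑ t, ∑ i, θ (Fin.last T) i * v t i) + R (θ (Fin.last T)) ≤
        (∑ t, ∑ i, θ' i * v t i) + R θ') :
    -- group conditional coverage bound
    ∀ i : Fin k, 0 < (∑ t, g t i) →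
      |(∑ t, g t i * (if τ t ≤ τhat t then (1:ℝ) else 0)) / (∑ t, g t i) - q| ≤
        (⨆ j : Fin k, |fderiv ℝ R (θ (Fin.last T)) (Pi.single j 1)|) / (∑ t, g t i) := by
  intro i hTi
  set θs := θ (Fin.last T) with hθs
  set e : Fin k → ℝ := Pi.single i 1 with he
  set c : ℝ → (Fin k → ℝ) := fun s => fun j => θs j + s * e j with hc
  have hc0 : c 0 = θs := by funext j; simp [hc]
  -- derivative of c
  have hcd : HasDerivAt c e 0 := by
    have : HasDerivAt (fun s : ℝ => θs + s • e) ((1:ℝ) • e) 0 :=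
      ((hasDerivAt_id 0).smul_const e).const_add θs
    have h2 : (fun s : ℝ => θs + s • e) = c := by
      funext s; funext j; simp [hc]
    rw [h2] at this
    simpa using this
  have hRd : HasDerivAt (fun s => R (c s)) (fderiv ℝ R θs e) 0 := by
    have hF : HasFDerivAt R (fderiv ℝ R θs) (c 0) := by
      rw [hc0]; exact (hR θs).hasFDerivAt
    exact hF.comp_hasDerivAt 0 hcd
  have hLd : HasDerivAt (fun s => ∑ t, ∑ j, c s j * v t j) (∑ t, v t i) 0 := by
    have hterm : ∀ t : Fin T, HasDerivAt (fun s => ∑ j, c s j * v t j) (v t i) 0 := by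
      intro t
      have h1 : ∀ j : Fin k, HasDerivAt (fun s => c s j * v t j) (e j * v t j) 0 := by
        intro j
        have h0 : HasDerivAt (fun s : ℝ => θs j + s * e j) (e j) 0 := by
          simpa using ((hasDerivAt_id (0:ℝ)).mul_const (e j)).const_add (θs j)
        simpa [hc] using h0.mul_const (v t j)
      have hs := HasDerivAt.fun_sum (fun j (_ : j ∈ Finset.univ) => h1 j)
      have hval : ∑ j : Fin k, e j * v t j = v t i := by
        simp [he, Pi.single_apply, ite_mul]
      rw [hval] at hs
      exact hs
    exact HasDerivAt.fun_sum (fun t _ => hterm t)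
  have hφd : HasDerivAt (fun s => (∑ t, ∑ j, c s j * v t j) + R (c s))
      ((∑ t, v t i) + fderiv ℝ R θs e) 0 := hLd.add hRd
  have hmin0 : IsLocalMin (fun s => (∑ t, ∑ j, c s j * v t j) + R (c s)) 0 := by
    exact Filter.Eventually.of_forall fun s => by simpa [hc0] using hmin (c s)
  have hzero : (∑ t, v t i) + fderiv ℝ R θs e = 0 := hmin0.hasDerivAt_eq_zero hφd
  have hsum : ∑ t, v t i =
      (∑ t, g t i * (if τ t ≤ τhat t then (1:ℝ) else 0)) - q * ∑ t, g t i := by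
    rw [Finset.mul_sum, ← Finset.sum_sub_distrib]
    apply Finset.sum_congr rfl
    intro t _
    rw [hv t]
    by_cases h : τhat t < τ t
    · have : ¬ τ t ≤ τhat t := not_le.mpr h
      simp [h, this]
    · have : τ t ≤ τhat t := not_lt.mp h
      simp [h, this]; ring
  have hkey : (∑ t, g t i * (if τ t ≤ τhat t then (1:ℝ) else 0)) - q * ∑ t, g t i =
      - fderiv ℝ R θs e := by
    rw [← hsum]; linarith [hzero]
  set M := ⨆ j : Fin k, |fderiv ℝ R θs (Pi.single j 1)| with hM
  have hle : |fderiv ℝ R θs e| ≤ M := by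
    apply le_ciSup (f := fun j : Fin k => |fderiv ℝ R θs (Pi.single j 1)|)
    exact (Set.finite_range _).bddAbove
  have habs : |(∑ t, g t i * (if τ t ≤ τhat t then (1:ℝ) else 0)) - q * ∑ t, g t i| ≤ M := by
    rw [hkey, abs_neg]; exact hle
  have hTine : (∑ t, g t i) ≠ 0 := ne_of_gt hTi
  have heq : (∑ t, g t i * (if τ t ≤ τhat t then (1:ℝ) else 0)) / (∑ t, g t i) - q =
      ((∑ t, g t i * (if τ t ≤ τhat t then (1:ℝ) else 0)) - q * ∑ t, g t i) / (∑ t, g t i) := by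
    field_simp
  rw [heq, abs_div, abs_of_pos hTi]
  gcongr
end

section
/- Let q ∈ (0,1), η > 0, T ≥ 1, k ≥ 1. Let g_1,…,g_T ∈ [0,1]^k, τ_1,…,τ_T ∈ [0,1], and let θ_1,…,θ_{T+1} ∈ ℝ^k be the GCACI iterates with predictions τ̂_t = ⟨θ_t, g_t⟩. Then for every coordinate i ∈ {1,…,k} with T_i = Σ_{t=1}^T g_{t,i} > 0, the group conditional miscoverage satisfies |(1/T_i)·Σ_{t=1}^T g_{t,i}·1[τ̂_t ≥ τ_t] − q| ≤ ‖θ_{T+1}‖_∞ / (T_i·η), where ‖·‖_∞ denotes the maximum absolute value of a coordinate. -/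
theorem stmt12 (q η : ℝ) (hq0 : 0 < q) (hq1 : q < 1) (hη : 0 < η)
    (T k : ℕ) (hT : 1 ≤ T) (hk : 1 ≤ k)
    (g : Fin T → Fin k → ℝ) (hg : ∀ t i, g t i ∈ Set.Icc (0:ℝ) 1)
    (τ : Fin T → ℝ) (hτ : ∀ t, τ t ∈ Set.Icc (0:ℝ) 1)
    -- GCACI iterates: θ 0 = θ_1, ..., θ T = θ_{T+1}
    (θ : ℕ → Fin k → ℝ) (hθ0 : θ 0 = fun _ => 0)
    (τhat : Fin T → ℝ) (hτhat : ∀ t : Fin T, τhat t = ∑ i, θ t.1 i * g t i)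
    (hstep : ∀ t : Fin T, θ (t.1 + 1) =
      if τhat t < τ t then (fun i => θ t.1 i + η * q * g t i)
      else (fun i => θ t.1 i - η * (1 - q) * g t i)) :
    -- group conditional miscoverage bound via the last iterate
    ∀ i : Fin k, 0 < (∑ t, g t i) →
      |(∑ t, g t i * (if τ t ≤ τhat t then (1:ℝ) else 0)) / (∑ t, g t i) - q| ≤
        (⨆ j : Fin k, |θ T j|) / ((∑ t, g t i) * η) := by
  intro i hTi
  -- increment at step t in coordinate i
  set d : Fin T → ℝ := fun t =>
    if τhat t < τ t then η * q * g t i else -(η * (1 - q) * g t i) with hd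
  have key : ∀ n, n ≤ T →
      θ n i = ∑ t ∈ Finset.univ.filter (fun t : Fin T => t.1 < n), d t := by
    intro n
    induction n with
    | zero =>
      intro _
      simp [hθ0]
    | succ n ih =>
      intro hn
      have hnT : n < T := hn
      have ihv := ih (le_of_lt hnT)
      have hfil : (Finset.univ.filter (fun t : Fin T => t.1 < n + 1)) =
          insert ⟨n, hnT⟩ (Finset.univ.filter (fun t : Fin T => t.1 < n)) := by
        ext t
        simp only [Finset.mem_filter, Finset.mem_insert, Finset.mem_univ, true_and]
        constructor
        · intro h
          rcases Nat.lt_succ_iff_lt_or_eq.mp h with h | h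
          · exact Or.inr h
          · exact Or.inl (Fin.ext h)
        · rintro (rfl | h)
          · exact Nat.lt_succ_self n
          · exact Nat.lt_succ_of_lt h
      have hnotmem : (⟨n, hnT⟩ : Fin T) ∉
          Finset.univ.filter (fun t : Fin T => t.1 < n) := by simp
      rw [hfil, Finset.sum_insert hnotmem, ← ihv]
      have := hstep ⟨n, hnT⟩
      by_cases hc : τhat ⟨n, hnT⟩ < τ ⟨n, hnT⟩ <;>
        simp only [hc, if_true, if_false, hd] at this ⊢ <;>
        rw [show n + 1 = (⟨n, hnT⟩ : Fin T).1 + 1 from rfl, this] <;> ring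
  have hfull : (Finset.univ.filter (fun t : Fin T => t.1 < T)) = Finset.univ := by
    ext t; simp [t.2]
  have hθT : θ T i = η * (q * (∑ t, g t i) -
      (∑ t, g t i * (if τ t ≤ τhat t then (1:ℝ) else 0))) := by
    rw [key T le_rfl, hfull]
    simp only [mul_sub, Finset.mul_sum, ← Finset.sum_sub_distrib]
    apply Finset.sum_congr rfl
    intro t _
    by_cases hc : τhat t < τ t
    · have : ¬ τ t ≤ τhat t := not_le.mpr hc
      simp [hd, hc, this]; ring
    · have : τ t ≤ τhat t := not_lt.mp hc
      simp [hd, hc, this]; ring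
  set C := ∑ t, g t i * (if τ t ≤ τhat t then (1:ℝ) else 0) with hC
  set S := ∑ t, g t i with hS
  have habs : |C / S - q| = |θ T i| / (S * η) := by
    have h1 : C / S - q = -(θ T i) / (S * η) := by
      field_simp [hθT]
      rw [hθT]; ring
    rw [h1, abs_div, abs_neg, abs_of_pos (mul_pos hTi hη)]
  rw [habs]
  have hbdd : BddAbove (Set.range fun j : Fin k => |θ T j|) := Set.Finite.bddAbove (Set.finite_range _)
  exact div_le_div_of_nonneg_right (le_ciSup hbdd i) (mul_pos hTi hη).le
end

section
/- Let q ∈ (0,1), η ∈ (0,1], T ≥ 1, k ≥ 1. Let g_1,…,g_T ∈ [0,1]^k, τ_1,…,τ_T ∈ [0,1], and let θ_1,…,θ_{T+1} ∈ ℝ^k be the GCACI iterates. Then ‖θ_{T+1}‖₂² ≤ T·η·(η·k·max{q, 1−q}² + 2q); in particular ‖θ_{T+1}‖_∞ ≤ sqrt(T·η)·sqrt(η·k·max{q, 1−q}² + 2q), where ‖·‖₂ is the Euclidean norm and ‖·‖_∞ the maximum absolute value of a coordinate. -/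
theorem stmt14 (q η : ℝ) (hq0 : 0 < q) (hq1 : q < 1) (hη0 : 0 < η) (hη1 : η ≤ 1)
    (T k : ℕ) (hT : 1 ≤ T) (hk : 1 ≤ k)
    (g : Fin T → Fin k → ℝ) (hg : ∀ t i, g t i ∈ Set.Icc (0:ℝ) 1)
    (τ : Fin T → ℝ) (hτ : ∀ t, τ t ∈ Set.Icc (0:ℝ) 1)
    -- GCACI iterates: θ 0 = θ_1, ..., θ T = θ_{T+1}
    (θ : ℕ → Fin k → ℝ) (hθ0 : θ 0 = fun _ => 0)
    (τhat : Fin T → ℝ) (hτhat : ∀ t : Fin T, τhat t = ∑ i, θ t.1 i * g t i)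
    (hstep : ∀ t : Fin T, θ (t.1 + 1) =
      if τhat t < τ t then (fun i => θ t.1 i + η * q * g t i)
      else (fun i => θ t.1 i - η * (1 - q) * g t i)) :
    -- squared Euclidean norm bound on the last iterate
    ((∑ i, θ T i ^ 2) ≤ T * η * (η * k * max q (1 - q) ^ 2 + 2 * q)) ∧
    -- sup norm bound on the last iterate
    ((⨆ j : Fin k, |θ T j|) ≤
      Real.sqrt (T * η) * Real.sqrt (η * k * max q (1 - q) ^ 2 + 2 * q)) := by
  set M := max q (1 - q) with hM
  set B := η * k * M ^ 2 + 2 * q with hB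
  have hM0 : 0 ≤ M := le_trans hq0.le (le_max_left _ _)
  have hB0 : 0 ≤ B := by positivity
  have hgsq : ∀ t : Fin T, (∑ i, (g t i) ^ 2) ≤ (k : ℝ) := by
    intro t
    calc (∑ i, (g t i) ^ 2) ≤ ∑ _i : Fin k, (1:ℝ) := by
          apply Finset.sum_le_sum
          intro i _
          have h := hg t i
          nlinarith [h.1, h.2]
      _ = (k : ℝ) := by simp
  -- one step bound
  have hstep' : ∀ t : Fin T, (∑ i, θ (t.1 + 1) i ^ 2) ≤ (∑ i, θ t.1 i ^ 2) + η * B := by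
    intro t
    rw [hstep t]
    by_cases h : τhat t < τ t
    · simp only [h, if_true]
      have hexp : (∑ i, (θ t.1 i + η * q * g t i) ^ 2)
          = (∑ i, θ t.1 i ^ 2) + 2 * (η * q) * (∑ i, θ t.1 i * g t i)
            + (η * q)^2 * (∑ i, (g t i)^2) := by
        rw [Finset.mul_sum, Finset.mul_sum, ← Finset.sum_add_distrib, ← Finset.sum_add_distrib]
        apply Finset.sum_congr rfl
        intro i _
        ring
      rw [hexp]
      have h1 : (∑ i, θ t.1 i * g t i) ≤ 1 := by
        rw [← hτhat t]; exact h.le.trans (hτ t).2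
      have h2 : (η * q)^2 * (∑ i, (g t i)^2) ≤ (η * q)^2 * k :=
        mul_le_mul_of_nonneg_left (hgsq t) (by positivity)
      have hqM : q ≤ M := le_max_left _ _
      have : (η * q)^2 * (k:ℝ) ≤ η * (η * k * M^2) := by
        have hq2 : q^2 ≤ M^2 := pow_le_pow_left₀ hq0.le hqM 2
        nlinarith [mul_nonneg (sq_nonneg η) (Nat.cast_nonneg (α := ℝ) k)]
      nlinarith [mul_le_mul_of_nonneg_left h1 (by positivity : (0:ℝ) ≤ 2 * (η * q))]
    · simp only [h, if_false]
      have hexp : (∑ i, (θ t.1 i - η * (1 - q) * g t i) ^ 2)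
          = (∑ i, θ t.1 i ^ 2) - 2 * (η * (1 - q)) * (∑ i, θ t.1 i * g t i)
            + (η * (1 - q))^2 * (∑ i, (g t i)^2) := by
        rw [Finset.mul_sum, Finset.mul_sum, ← Finset.sum_sub_distrib, ← Finset.sum_add_distrib]
        apply Finset.sum_congr rfl
        intro i _
        ring
      rw [hexp]
      have h1 : (0:ℝ) ≤ (∑ i, θ t.1 i * g t i) := by
        rw [← hτhat t]
        exact le_trans (hτ t).1 (not_lt.mp h)
      have h2 : (η * (1 - q))^2 * (∑ i, (g t i)^2) ≤ (η * (1 - q))^2 * k :=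
        mul_le_mul_of_nonneg_left (hgsq t) (by positivity)
      have hqM : 1 - q ≤ M := le_max_right _ _
      have h3 : (η * (1 - q))^2 * (k:ℝ) ≤ η * (η * k * M^2) := by
        have hq2 : (1 - q)^2 ≤ M^2 := pow_le_pow_left₀ (by linarith) hqM 2
        nlinarith [mul_nonneg (sq_nonneg η) (Nat.cast_nonneg (α := ℝ) k)]
      have h4 : 0 ≤ 2 * (η * (1 - q)) * (∑ i, θ t.1 i * g t i) := by
        apply mul_nonneg _ h1
        have : 0 ≤ 1 - q := by linarith
        positivity
      nlinarith
  -- induction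
  have hind : ∀ n, n ≤ T → (∑ i, θ n i ^ 2) ≤ n * (η * B) := by
    intro n
    induction n with
    | zero => intro _; simp [hθ0]
    | succ m ih =>
      intro hm
      have hmT : m < T := hm
      have := hstep' ⟨m, hmT⟩
      have ihm := ih (le_of_lt hmT)
      push_cast
      calc (∑ i, θ (m+1) i ^ 2) ≤ (∑ i, θ m i ^ 2) + η * B := this
        _ ≤ m * (η * B) + η * B := by linarith
        _ = (m + 1) * (η * B) := by ring
  have hmain : (∑ i, θ T i ^ 2) ≤ T * η * B := by
    have := hind T le_rfl
    linarith [this, (by ring : (T:ℝ) * (η * B) = T * η * B)]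
  refine ⟨hmain, ?_⟩
  haveI : Nonempty (Fin k) := ⟨⟨0, hk⟩⟩
  rw [← Real.sqrt_mul (by positivity : (0:ℝ) ≤ (T:ℝ) * η)]
  apply ciSup_le
  intro j
  have hj : θ T j ^ 2 ≤ (T:ℝ) * η * B := by
    refine le_trans ?_ hmain
    apply Finset.single_le_sum (f := fun i => θ T i ^ 2) (fun i _ => sq_nonneg _) (Finset.mem_univ j)
  calc |θ T j| = Real.sqrt (θ T j ^ 2) := (Real.sqrt_sq_eq_abs _).symm
    _ ≤ Real.sqrt ((T:ℝ) * η * B) := Real.sqrt_le_sqrt hj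
end

section
/- Let q ∈ (0,1), η ∈ (0,1], T ≥ 1, k ≥ 1. Let g_1,…,g_T ∈ [0,1]^k, τ_1,…,τ_T ∈ [0,1], and let θ_1,…,θ_{T+1} ∈ ℝ^k be the GCACI iterates with predictions τ̂_t = ⟨θ_t, g_t⟩. Then for every coordinate i ∈ {1,…,k} with T_i = Σ_{t=1}^T g_{t,i} > 0, the group conditional miscoverage satisfies |(1/T_i)·Σ_{t=1}^T g_{t,i}·1[τ̂_t ≥ τ_t] − q| ≤ sqrt(T·η·(η·k·max{q, 1−q}² + 2q)) / (T_i·η). -/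
theorem stmt15 (q η : ℝ) (hq0 : 0 < q) (hq1 : q < 1) (hη0 : 0 < η) (hη1 : η ≤ 1)
    (T k : ℕ) (hT : 1 ≤ T) (hk : 1 ≤ k)
    (g : Fin T → Fin k → ℝ) (hg : ∀ t i, g t i ∈ Set.Icc (0:ℝ) 1)
    (τ : Fin T → ℝ) (hτ : ∀ t, τ t ∈ Set.Icc (0:ℝ) 1)
    -- GCACI iterates: θ 0 = θ_1, ..., θ T = θ_{T+1}
    (θ : ℕ → Fin k → ℝ) (hθ0 : θ 0 = fun _ => 0)
    (τhat : Fin T → ℝ) (hτhat : ∀ t : Fin T, τhat t = ∑ i, θ t.1 i * g t i)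
    (hstep : ∀ t : Fin T, θ (t.1 + 1) =
      if τhat t < τ t then (fun i => θ t.1 i + η * q * g t i)
      else (fun i => θ t.1 i - η * (1 - q) * g t i)) :
    -- group conditional miscoverage bound
    ∀ i : Fin k, 0 < (∑ t, g t i) →
      |(∑ t, g t i * (if τ t ≤ τhat t then (1:ℝ) else 0)) / (∑ t, g t i) - q| ≤
        Real.sqrt (T * η * (η * k * max q (1 - q) ^ 2 + 2 * q)) / ((∑ t, g t i) * η) := by
  intro i hTi
  set M := max q (1 - q) with hM
  have hMq : q ≤ M := le_max_left _ _
  have hM1q : 1 - q ≤ M := le_max_right _ _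
  have hM0 : 0 < M := lt_of_lt_of_le hq0 hMq
  -- potential bound
  have key : ∀ n, n ≤ T → (∑ j, (θ n j)^2) ≤ n * (η^2 * k * M^2 + 2*η*q) := by
    intro n hn
    induction n with
    | zero => simp [hθ0]
    | succ n ih =>
      have hnT : n < T := hn
      have ihn := ih (le_of_lt hnT)
      set t : Fin T := ⟨n, hnT⟩ with ht
      have hstept := hstep t
      have hg2 : (∑ j, (g t j)^2) ≤ (k:ℝ) := by
        calc ∑ j, (g t j)^2 ≤ ∑ _j : Fin k, (1:ℝ) :=
              Finset.sum_le_sum (fun j _ => by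
                have h1 := (hg t j).1; have h2 := (hg t j).2; nlinarith)
          _ = k := by simp
      have hg2nn : (0:ℝ) ≤ ∑ j, (g t j)^2 :=
        Finset.sum_nonneg (fun j _ => sq_nonneg _)
      have hτh : τhat t = ∑ j, θ n j * g t j := hτhat t
      have hτt1 : τ t ≤ 1 := (hτ t).2
      have hτt0 : 0 ≤ τ t := (hτ t).1
      by_cases hc : τhat t < τ t
      · rw [if_pos hc] at hstept
        have expand : (∑ j, (θ (n+1) j)^2) =
            (∑ j, (θ n j)^2) + 2*(η*q)*(∑ j, θ n j * g t j)
              + (η*q)^2 * (∑ j, (g t j)^2) := by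
          rw [hstept]
          rw [Finset.mul_sum, Finset.mul_sum, ← Finset.sum_add_distrib,
            ← Finset.sum_add_distrib]
          exact Finset.sum_congr rfl fun j _ => by ring
        have hub : τhat t ≤ 1 := le_trans (le_of_lt hc) hτt1
        have h1 : (η*q)^2 * (∑ j, (g t j)^2) ≤ η^2 * k * M^2 := by
          have hq2 : q^2 ≤ M^2 := pow_le_pow_left₀ hq0.le hMq 2
          have hqM : (η*q)^2 ≤ η^2*M^2 := by
            calc (η*q)^2 = η^2*q^2 := by ring
              _ ≤ η^2*M^2 := mul_le_mul_of_nonneg_left hq2 (sq_nonneg η)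
          calc (η*q)^2 * (∑ j, (g t j)^2) ≤ (η^2*M^2) * (∑ j, (g t j)^2) :=
                mul_le_mul_of_nonneg_right hqM hg2nn
            _ ≤ (η^2*M^2) * k := mul_le_mul_of_nonneg_left hg2 (by positivity)
            _ = η^2 * k * M^2 := by ring
        have h2 : 2*(η*q)*(∑ j, θ n j * g t j) ≤ 2*η*q := by
          rw [← hτh]
          nlinarith [mul_nonneg (mul_pos hη0 hq0).le (by linarith : (0:ℝ) ≤ 1 - τhat t)]
        push_cast
        rw [expand]; linarith
      · rw [if_neg hc] at hstept
        have hub : 0 ≤ τhat t := le_trans hτt0 (not_lt.mp hc)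
        have expand : (∑ j, (θ (n+1) j)^2) =
            (∑ j, (θ n j)^2) - 2*(η*(1-q))*(∑ j, θ n j * g t j)
              + (η*(1-q))^2 * (∑ j, (g t j)^2) := by
          rw [hstept]
          rw [Finset.mul_sum, Finset.mul_sum, ← Finset.sum_sub_distrib,
            ← Finset.sum_add_distrib]
          exact Finset.sum_congr rfl fun j _ => by ring
        have h1 : (η*(1-q))^2 * (∑ j, (g t j)^2) ≤ η^2 * k * M^2 := by
          have hq2 : (1-q)^2 ≤ M^2 := pow_le_pow_left₀ (by linarith) hM1q 2
          have hqM : (η*(1-q))^2 ≤ η^2*M^2 := by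
            calc (η*(1-q))^2 = η^2*(1-q)^2 := by ring
              _ ≤ η^2*M^2 := mul_le_mul_of_nonneg_left hq2 (sq_nonneg η)
          calc (η*(1-q))^2 * (∑ j, (g t j)^2) ≤ (η^2*M^2) * (∑ j, (g t j)^2) :=
                mul_le_mul_of_nonneg_right hqM hg2nn
            _ ≤ (η^2*M^2) * k := mul_le_mul_of_nonneg_left hg2 (by positivity)
            _ = η^2 * k * M^2 := by ring
        have h2 : 0 ≤ 2*(η*(1-q))*(∑ j, θ n j * g t j) := by
          rw [← hτh]
          exact mul_nonneg (by nlinarith) hub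
        have h3 : (0:ℝ) ≤ 2*η*q := by positivity
        push_cast
        rw [expand]; linarith
  -- telescoping identity
  set inc : ℕ → ℝ := fun m => if h : m < T then
      (if τhat ⟨m, h⟩ < τ ⟨m, h⟩ then η*q*g ⟨m, h⟩ i else -(η*(1-q)*g ⟨m, h⟩ i))
    else 0 with hinc
  have tele : ∀ n, n ≤ T → θ n i = ∑ m ∈ Finset.range n, inc m := by
    intro n hn
    induction n with
    | zero => simp [hθ0]
    | succ n ih =>
      have hnT : n < T := hn
      have ihn := ih (le_of_lt hnT)
      set t : Fin T := ⟨n, hnT⟩ with ht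
      have hstept := hstep t
      rw [Finset.sum_range_succ, ← ihn]
      have hincn : inc n = (if τhat t < τ t then η*q*g t i else -(η*(1-q)*g t i)) := by
        simp only [hinc]; rw [dif_pos hnT]
      rw [hincn]
      by_cases hc : τhat t < τ t
      · rw [if_pos hc] at hstept ⊢
        have : θ (n+1) = fun j => θ n j + η * q * g t j := hstept
        rw [this]
      · rw [if_neg hc] at hstept ⊢
        have : θ (n+1) = fun j => θ n j - η * (1-q) * g t j := hstept
        rw [this]; ring
  have hθT : θ T i = ∑ t : Fin T,
      (if τhat t < τ t then η*q*g t i else -(η*(1-q)*g t i)) := by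
    rw [tele T le_rfl, ← Fin.sum_univ_eq_sum_range inc T]
    refine Finset.sum_congr rfl fun t _ => ?_
    simp only [hinc]; rw [dif_pos t.2]
  -- relate to coverage
  set N := ∑ t, g t i * (if τ t ≤ τhat t then (1:ℝ) else 0) with hN
  set Ti := ∑ t, g t i with hTidef
  have hrel : θ T i = η * (q * Ti - N) := by
    have hpt : ∀ t : Fin T, (if τhat t < τ t then η*q*g t i else -(η*(1-q)*g t i))
        = η*(q*g t i) - η*(g t i * (if τ t ≤ τhat t then (1:ℝ) else 0)) := by
      intro t
      by_cases h : τhat t < τ t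
      · rw [if_pos h, if_neg (not_le.mpr h)]; ring
      · rw [if_neg h, if_pos (not_lt.mp h)]; ring
    rw [hθT, Finset.sum_congr rfl (fun t _ => hpt t), Finset.sum_sub_distrib,
      ← Finset.mul_sum, ← Finset.mul_sum, ← Finset.mul_sum]
    ring
  -- bound on |θ T i|
  have hsq : (θ T i)^2 ≤ T * η * (η * k * M^2 + 2*q) := by
    have h1 : (θ T i)^2 ≤ ∑ j, (θ T j)^2 :=
      Finset.single_le_sum (f := fun j => (θ T j)^2) (fun j _ => sq_nonneg _)
        (Finset.mem_univ i)
    have h2 := key T le_rfl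
    calc (θ T i)^2 ≤ ∑ j, (θ T j)^2 := h1
      _ ≤ T * (η^2 * k * M^2 + 2*η*q) := h2
      _ = T * η * (η * k * M^2 + 2*q) := by ring
  have habs : |θ T i| ≤ Real.sqrt (T * η * (η * k * M^2 + 2*q)) := by
    rw [← Real.sqrt_sq_eq_abs]
    exact Real.sqrt_le_sqrt hsq
  have hTine : Ti ≠ 0 := ne_of_gt hTi
  have hηne : η ≠ 0 := ne_of_gt hη0
  have hNeq : N / Ti - q = -(θ T i) / (Ti * η) := by
    rw [hrel]; field_simp; ring
  rw [hNeq, abs_div, abs_neg, abs_of_pos (by positivity : (0:ℝ) < Ti * η)]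
  gcongr
end

section
/- The √T growth of GCACI iterates is attained for real-valued group weights: let q ∈ (0,1), k = 1, η = 1, set g_1 = 0 and g_t = 1/(2·sqrt(t−1)) for t ≥ 2, and τ_t = 1 for all t. Let θ_1,…,θ_{T+1} ∈ ℝ be the GCACI iterates. Then the condition θ_t·g_t < τ_t holds at every round t ∈ {1,…,T} (so the additive update is triggered every round), and θ_{T+1} = q·Σ_{j=1}^{T−1} 1/(2·sqrt(j)) ≥ q·(sqrt(T) − 1). -/
noncomputable def S16 (n : ℕ) : ℝ := ∑ j ∈ Finset.Icc 1 n, 1 / (2 * Real.sqrt j)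

lemma sqrt_diff (x : ℝ) (hx : 0 ≤ x) :
    Real.sqrt (x + 1) - Real.sqrt x = 1 / (Real.sqrt (x + 1) + Real.sqrt x) := by
  have h1 : (0:ℝ) < Real.sqrt (x + 1) := Real.sqrt_pos.2 (by linarith)
  have h2 : (0:ℝ) ≤ Real.sqrt x := Real.sqrt_nonneg x
  have hd : Real.sqrt (x + 1) + Real.sqrt x ≠ 0 := by positivity
  field_simp
  nlinarith [Real.sq_sqrt (show (0:ℝ) ≤ x + 1 by linarith), Real.sq_sqrt hx]

lemma S16_succ (n : ℕ) : S16 (n + 1) = S16 n + 1 / (2 * Real.sqrt (n + 1)) := by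
  unfold S16
  rw [Finset.sum_Icc_succ_top (by omega)]
  push_cast
  ring

lemma S16_zero : S16 0 = 0 := by simp [S16]

lemma S16_nonneg (n : ℕ) : 0 ≤ S16 n := by
  unfold S16; apply Finset.sum_nonneg; intro i _; positivity

lemma S16_le (n : ℕ) : S16 n ≤ Real.sqrt n := by
  induction n with
  | zero => simp [S16_zero]
  | succ n ih =>
    rw [S16_succ]
    have h := sqrt_diff n (by positivity)
    have h1 : (0:ℝ) < Real.sqrt ((n:ℝ) + 1) := Real.sqrt_pos.2 (by positivity)
    have h2 : Real.sqrt (n:ℝ) ≤ Real.sqrt ((n:ℝ)+1) := Real.sqrt_le_sqrt (by linarith)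
    have key : 1 / (2 * Real.sqrt ((n:ℝ)+1)) ≤ Real.sqrt ((n:ℝ)+1) - Real.sqrt n := by
      rw [h]
      apply div_le_div_of_nonneg_left (by norm_num) (by positivity) (by linarith)
    push_cast
    linarith

lemma S16_ge (n : ℕ) : Real.sqrt (n + 1) - 1 ≤ S16 n := by
  induction n with
  | zero => simp [S16_zero]
  | succ n ih =>
    rw [S16_succ]
    have h := sqrt_diff ((n:ℝ)+1) (by positivity)
    have h1 : (0:ℝ) < Real.sqrt ((n:ℝ) + 1) := Real.sqrt_pos.2 (by positivity)
    have h2 : Real.sqrt ((n:ℝ)+1) ≤ Real.sqrt ((n:ℝ)+2) := Real.sqrt_le_sqrt (by linarith)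
    rw [show ((n:ℝ)+1)+1 = (n:ℝ)+2 by ring] at h
    have key : Real.sqrt ((n:ℝ)+2) - Real.sqrt ((n:ℝ)+1) ≤ 1 / (2 * Real.sqrt ((n:ℝ)+1)) := by
      rw [h]
      apply div_le_div_of_nonneg_left (by norm_num) (by positivity) (by linarith)
    push_cast
    rw [show ((n:ℝ)+1)+1 = (n:ℝ)+2 by ring]
    linarith

theorem stmt16 (q : ℝ) (hq0 : 0 < q) (hq1 : q < 1) (T : ℕ) (hT : 1 ≤ T)
    -- group weights (0-indexed round t corresponds to round t+1 of the paper):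
    -- g_1 = 0 and g_t = 1/(2·√(t-1)) for t ≥ 2
    (g : ℕ → ℝ) (hg0 : g 0 = 0) (hg : ∀ t : ℕ, 1 ≤ t → g t = 1 / (2 * Real.sqrt t))
    -- realized thresholds are all 1
    (τ : ℕ → ℝ) (hτ1 : ∀ t, τ t = 1)
    -- GCACI iterates with k = 1 and η = 1: θ 0 = θ_1, ..., θ T = θ_{T+1}
    (θ : ℕ → ℝ) (hθ0 : θ 0 = 0)
    (hstep : ∀ t < T, θ (t + 1) =
      if θ t * g t < τ t then θ t + q * g t else θ t - (1 - q) * g t) :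
    -- the additive update is triggered at every round, and θ_{T+1} grows like √T
    (∀ t < T, θ t * g t < τ t) ∧
    (θ T = q * ∑ j ∈ Finset.Icc 1 (T - 1), 1 / (2 * Real.sqrt j)) ∧
    (q * (Real.sqrt T - 1) ≤ θ T) := by
  -- key invariant
  have cond : ∀ t : ℕ, θ t = q * S16 (t - 1) → θ t * g t < τ t := by
    intro t ht
    rw [hτ1]
    rcases Nat.eq_zero_or_pos t with h0 | h1
    · subst h0; rw [hg0]; simp
    · rw [hg t h1, ht]
      have hs1 : S16 (t - 1) ≤ Real.sqrt (t - 1 : ℕ) := S16_le _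
      have hs2 : Real.sqrt ((t-1 : ℕ) : ℝ) ≤ Real.sqrt t := by
        apply Real.sqrt_le_sqrt; exact_mod_cast Nat.sub_le t 1
      have hst : (0:ℝ) < Real.sqrt t := Real.sqrt_pos.2 (by positivity)
      have hSle : S16 (t-1) ≤ Real.sqrt t := le_trans hs1 hs2
      have hSnn := S16_nonneg (t-1)
      have : S16 (t-1) * (1 / (2 * Real.sqrt t)) ≤ 1/2 := by
        rw [mul_one_div, div_le_iff₀ (by positivity)]
        nlinarith
      nlinarith
  have inv : ∀ t ≤ T, θ t = q * S16 (t - 1) := by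
    intro t
    induction t with
    | zero => intro _; simp [hθ0, S16_zero]
    | succ t ih =>
      intro hle
      have htT : t < T := by omega
      have hih := ih (le_of_lt htT)
      have hc := cond t hih
      rw [hstep t htT, if_pos hc, hih]
      rcases Nat.eq_zero_or_pos t with h0 | h1
      · subst h0; simp [hg0, S16_zero]
      · rw [hg t h1]
        have : t + 1 - 1 = (t - 1) + 1 := by omega
        rw [this, S16_succ]
        have : ((t - 1 : ℕ) : ℝ) + 1 = (t : ℝ) := by
          have : t - 1 + 1 = t := by omega
          exact_mod_cast congrArg (Nat.cast (R := ℝ)) this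
        rw [this]; ring
  have hθT := inv T le_rfl
  refine ⟨fun t ht => cond t (inv t (le_of_lt ht)), hθT, ?_⟩
  rw [hθT]
  have h := S16_ge (T - 1)
  have : ((T - 1 : ℕ) : ℝ) + 1 = (T : ℝ) := by
    have : T - 1 + 1 = T := by omega
    exact_mod_cast congrArg (Nat.cast (R := ℝ)) this
  rw [this] at h
  nlinarith [S16_nonneg (T-1)]
end
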